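/- Let n be a positive integer and let A = {a_1, a_2, …, a_n} be a multiset of positive integers. Then A is a multi Skolem set (i.e., the set {1, 2, …, 2n} can be partitioned into n pairs (s_i, t_i) whose differences t_i − s_i form the multiset A) if and only if there exists a fixed-point-free involution π of {1, …, 2n} such that for every positive integer a, the entries d_{2n−a} and d_{2n+a} of the diagonal X-ray d(π) = (d_1, …, d_{4n−1}) both equal the multiplicity of a in A, and d_{2n} = 0. -/

import Mathlib

/-- The multiset of all endpoints of the pairs `(s i, t i)`. -/
def pairsMultiset (n : ℕ) (s t : Fin n → ℕ) : Multiset ℕ :=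
  (Finset.univ : Finset (Fin n)).val.bind fun i => {s i, t i}

/-- The pairs `(s i, t i)` form a partition of `{1, 2, …, 2n}`. -/
def IsPartitionOfIcc (n : ℕ) (s t : Fin n → ℕ) : Prop :=
  pairsMultiset n s t = Multiset.map (· + 1) (Multiset.range (2 * n))

/-- The `k`-th entry (`k = 1, …, 2m-1`) of the diagonal (Toeplitz) X-ray of a
permutation `π` of `{1, …, m}` (encoded 0-based on `Fin m`):
`d_k = #{i : i - π(i) = m - k}`. -/
def diagXray (m : ℕ) (π : Equiv.Perm (Fin m)) (k : ℤ) : ℕ :=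
  (Finset.univ.filter fun i : Fin m =>
    ((i : ℕ) : ℤ) - ((π i : ℕ) : ℤ) = (m : ℤ) - k).card

/-!
Pairing every point of `{1, …, 2n}` with its partner turns a partition into pairs into a
fixed-point-free involution `π`, and back. A pair `{s, t}` with `t - s = b` contributes exactly
one `i` with `π i - i = b` and one with `i - π i = b`, so the X-ray entries `d_{2n + b}` and
`d_{2n - b}` both count the pairs of difference `b`, while `d_{2n}` counts the fixed points.
Conversely, the counts for `b > 0` determine the multiset of differences, because it has exactly
`n` elements.
-/

open Finset

lemma Multiset.eq_of_card_eq_of_count_pos_eq {m₁ m₂ : Multiset ℕ} (hcard : m₁.card = m₂.card)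
    (hcount : ∀ b, 0 < b → m₁.count b = m₂.count b) : m₁ = m₂ := by
  have hpos : m₁.filter (0 < ·) = m₂.filter (0 < ·) := by
    ext b
    simp only [Multiset.count_filter]
    split_ifs with hb
    · exact hcount b hb
    · rfl
  have hzero (m : Multiset ℕ) : m.filter (¬ 0 < ·) = .replicate (m.filter (¬ 0 < ·)).card 0 :=
    Multiset.eq_replicate_card.mpr fun b hb => by simpa using (Multiset.mem_filter.mp hb).2
  have hzero_card : (m₁.filter (¬ 0 < ·)).card = (m₂.filter (¬ 0 < ·)).card := by
    have h₁ := congrArg Multiset.card (Multiset.filter_add_not (0 < ·) m₁)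
    have h₂ := congrArg Multiset.card (Multiset.filter_add_not (0 < ·) m₂)
    rw [Multiset.card_add] at h₁ h₂
    rw [hpos] at h₁
    omega
  rw [← Multiset.filter_add_not (0 < ·) m₁, ← Multiset.filter_add_not (0 < ·) m₂, hpos,
    hzero m₁, hzero m₂, hzero_card]

section DiagXray

variable {m : ℕ} (π : Equiv.Perm (Fin m))

lemma diagXray_symm (k : ℤ) : diagXray m π.symm k = diagXray m π (2 * m - k) := by
  refine Finset.card_equiv π.symm fun i => ?_
  simp only [mem_filter, mem_univ, true_and, Equiv.apply_symm_apply]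
  omega

lemma diagXray_sub_eq_add (hπ : Function.Involutive π) (b : ℤ) :
    diagXray m π (m - b) = diagXray m π (m + b) := by
  rw [show (m : ℤ) + b = 2 * m - (m - b) by ring, ← diagXray_symm,
    Function.Involutive.symm_eq_self_of_involutive π hπ]

lemma diagXray_self_eq_zero (hπ : ∀ i, π i ≠ i) : diagXray m π m = 0 := by
  refine Finset.card_eq_zero.mpr (Finset.filter_eq_empty_iff.mpr fun i _ h => hπ i ?_)
  omega

end DiagXray

def pairDiffs {m : ℕ} (π : Equiv.Perm (Fin m)) : Multiset ℕ :=
  (univ.filter fun x => x < π x).val.map fun x => (π x : ℕ) - x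

lemma count_pairDiffs {m : ℕ} (π : Equiv.Perm (Fin m)) {b : ℕ} (hb : 0 < b) :
    (pairDiffs π).count b = diagXray m π (m + b) := by
  rw [pairDiffs, Multiset.count_map, Finset.filter_val, Multiset.filter_filter, diagXray,
    Finset.card_def, Finset.filter_val]
  congr 1
  refine Multiset.filter_congr fun x _ => ?_
  rw [Fin.lt_def]
  omega

section Pairing

variable {α β : Type*}

-- A pairing of `α` is encoded as `e : β ⊕ β ≃ α` with pairs `{e (inl i), e (inr i)}`; its
-- involution is `e.permCongr (Equiv.sumComm β β)`.

lemma permCongr_sumComm_apply (e : β ⊕ β ≃ α) (x : β ⊕ β) :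
    e.permCongr (Equiv.sumComm β β) (e x) = e x.swap := by
  simp

lemma permCongr_sumComm_involutive (e : β ⊕ β ≃ α) :
    Function.Involutive (e.permCongr (Equiv.sumComm β β)) := fun y => by
  obtain ⟨x, rfl⟩ := e.surjective y
  rw [permCongr_sumComm_apply, permCongr_sumComm_apply, Sum.swap_swap]

lemma permCongr_sumComm_apply_ne (e : β ⊕ β ≃ α) (y : α) :
    e.permCongr (Equiv.sumComm β β) y ≠ y := by
  obtain ⟨x, rfl⟩ := e.surjective y
  rw [permCongr_sumComm_apply]
  exact e.injective.ne (by cases x <;> simp)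

lemma exists_sumEquiv_of_involutive [Fintype α] [LinearOrder α] {n : ℕ} {π : Equiv.Perm α}
    (hπ : Function.Involutive π) (hfix : ∀ x, π x ≠ x) (hcard : Fintype.card α = 2 * n) :
    ∃ e : Fin n ⊕ Fin n ≃ α, (∀ i, e (.inl i) < e (.inr i)) ∧
      e.permCongr (Equiv.sumComm _ _) = π := by
  have hswap (x : α) : x < π x ↔ ¬ π x < π (π x) := by
    rw [hπ x, not_lt]
    exact ⟨le_of_lt, fun h => lt_of_le_of_ne h (hfix x).symm⟩
  let τ : {x // x < π x} ≃ {x // ¬ x < π x} := π.subtypeEquiv hswap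
  have hlower : Fintype.card {x // x < π x} = n := by
    have := Fintype.card_congr τ
    rw [Fintype.card_subtype_compl] at this
    omega
  let E : Fin n ≃ {x // x < π x} := (Fintype.equivFinOfCardEq hlower).symm
  refine ⟨(Equiv.sumCongr E (E.trans τ)).trans (Equiv.sumCompl _), fun i => (E i).2, ?_⟩
  ext y
  obtain ⟨x, rfl⟩ := (Equiv.sumCongr E (E.trans τ)).trans (Equiv.sumCompl _) |>.surjective y
  rw [permCongr_sumComm_apply]
  rcases x with i | i <;> simp [τ, hπ _]

lemma pairDiffs_permCongr_sumComm [Fintype β] {m : ℕ} (e : β ⊕ β ≃ Fin m)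
    (he : ∀ i, e (.inl i) < e (.inr i)) :
    pairDiffs (e.permCongr (Equiv.sumComm β β)) =
      univ.val.map fun i => (e (.inr i) : ℕ) - e (.inl i) := by
  have hlower : univ.filter (fun x => x < e.permCongr (Equiv.sumComm β β) x) =
      univ.map ⟨e ∘ .inl, e.injective.comp Sum.inl_injective⟩ := by
    ext y
    obtain ⟨x, rfl⟩ := e.surjective y
    rcases x with i | i <;> simp [he, (he i).not_gt]
  rw [pairDiffs, hlower, Finset.map_val, Multiset.map_map]
  refine Multiset.map_congr rfl fun i _ => ?_
  simp

end Pairing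

lemma pairsMultiset_eq_map_sumElim (n : ℕ) (s t : Fin n → ℕ) :
    pairsMultiset n s t = univ.val.map (Sum.elim s t) := by
  rw [pairsMultiset, ← univ_disjSum_univ, val_disjSum, Multiset.disjSum, Multiset.map_add,
    Multiset.map_map, Multiset.map_map]
  simp [Multiset.insert_eq_cons]

lemma map_univ_eq_map_succ_range_iff {α : Type*} [Fintype α] {m : ℕ} (f : α → ℕ) :
    univ.val.map f = (Multiset.range m).map (· + 1) ↔ ∃ e : α ≃ Fin m, ∀ x, f x = e x + 1 := by
  constructor
  · intro h
    have hmem (x : α) : ∃ k < m, f x = k + 1 := by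
      have : f x ∈ (Multiset.range m).map (· + 1) := h ▸ Multiset.mem_map_of_mem f (mem_univ x)
      simpa [eq_comm] using this
    choose k hk hfk using hmem
    have hinj : Function.Injective f := fun x y hxy =>
      Multiset.inj_on_of_nodup_map (h ▸ (Multiset.nodup_range m).map (add_left_injective 1))
        x (mem_univ x) y (mem_univ y) hxy
    have hcard : Fintype.card α = Fintype.card (Fin m) := by
      simpa using congrArg Multiset.card h
    let e : α → Fin m := fun x => ⟨k x, hk x⟩
    have he : Function.Bijective e := by
      refine (Fintype.bijective_iff_injective_and_card e).mpr ⟨fun x y hxy => hinj ?_, hcard⟩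
      rw [hfk x, hfk y, show k x = k y from congrArg Fin.val hxy]
    exact ⟨Equiv.ofBijective e he, hfk⟩
  · rintro ⟨e, he⟩
    have hval : univ.val.map (Fin.val ∘ e) = Multiset.range m := by
      rw [← Multiset.map_map Fin.val e, Multiset.map_univ_val_equiv, Finset.val_univ_fin,
        Multiset.map_coe, List.map_coe_finRange_eq_range, Multiset.range]
    rw [← hval, Multiset.map_map]
    exact Multiset.map_congr rfl fun x _ => he x

lemma isPartitionOfIcc_iff (n : ℕ) (s t : Fin n → ℕ) :
    IsPartitionOfIcc n s t ↔
      ∃ e : Fin n ⊕ Fin n ≃ Fin (2 * n), ∀ i, s i = e (.inl i) + 1 ∧ t i = e (.inr i) + 1 := by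
  rw [IsPartitionOfIcc, pairsMultiset_eq_map_sumElim, map_univ_eq_map_succ_range_iff]
  simp [Sum.forall, forall_and]

lemma card_pairDiffs {n : ℕ} {π : Equiv.Perm (Fin (2 * n))} (hπ : Function.Involutive π)
    (hfix : ∀ x, π x ≠ x) : (pairDiffs π).card = n := by
  obtain ⟨e, hlt, rfl⟩ := exists_sumEquiv_of_involutive hπ hfix (Fintype.card_fin _)
  simp [pairDiffs_permCongr_sumComm e hlt]

lemma exists_pairing_iff_exists_involutive (n : ℕ) (M : Multiset ℕ) :
    (∃ s t : Fin n → ℕ, IsPartitionOfIcc n s t ∧ (∀ i, s i < t i) ∧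
        univ.val.map (fun i => t i - s i) = M) ↔
      ∃ π : Equiv.Perm (Fin (2 * n)), Function.Involutive π ∧ (∀ x, π x ≠ x) ∧
        pairDiffs π = M := by
  constructor
  · rintro ⟨s, t, hpart, hst, rfl⟩
    obtain ⟨e, he⟩ := (isPartitionOfIcc_iff n s t).mp hpart
    have hlt (i : Fin n) : e (.inl i) < e (.inr i) := by
      have := hst i
      rw [(he i).1, (he i).2] at this
      exact Fin.lt_def.mpr (by omega)
    refine ⟨e.permCongr (Equiv.sumComm _ _), permCongr_sumComm_involutive e,
      permCongr_sumComm_apply_ne e, ?_⟩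
    rw [pairDiffs_permCongr_sumComm e hlt]
    exact Multiset.map_congr rfl fun i _ => by rw [(he i).1, (he i).2]; omega
  · rintro ⟨π, hπ, hfix, rfl⟩
    obtain ⟨e, hlt, rfl⟩ := exists_sumEquiv_of_involutive hπ hfix (Fintype.card_fin _)
    refine ⟨fun i => e (.inl i) + 1, fun i => e (.inr i) + 1,
      (isPartitionOfIcc_iff n _ _).mpr ⟨e, fun i => ⟨rfl, rfl⟩⟩,
      fun i => Nat.succ_lt_succ (hlt i), ?_⟩
    simp [pairDiffs_permCongr_sumComm e hlt]

theorem stmt4_general (n : ℕ) (a : Fin n → ℕ) :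
    (∃ s t : Fin n → ℕ, IsPartitionOfIcc n s t ∧ (∀ i, s i < t i) ∧
        Multiset.map (fun i => t i - s i) (Finset.univ : Finset (Fin n)).val =
          Multiset.map a (Finset.univ : Finset (Fin n)).val) ↔
      ∃ π : Equiv.Perm (Fin (2 * n)), (∀ i, π (π i) = i) ∧ (∀ i, π i ≠ i) ∧
        (∀ b : ℕ, 0 < b →
          diagXray (2 * n) π ((2 * n : ℤ) - b) =
              Multiset.count b (Multiset.map a (Finset.univ : Finset (Fin n)).val) ∧
            diagXray (2 * n) π ((2 * n : ℤ) + b) =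
              Multiset.count b (Multiset.map a (Finset.univ : Finset (Fin n)).val)) ∧
        diagXray (2 * n) π (2 * n) = 0 := by
  rw [exists_pairing_iff_exists_involutive]
  refine exists_congr fun π => ?_
  have hcount (b : ℕ) (hb : 0 < b) :
      (pairDiffs π).count b = diagXray (2 * n) π (2 * n + b) := by
    exact_mod_cast count_pairDiffs π hb
  constructor
  · rintro ⟨hπ, hfix, hdiffs⟩
    refine ⟨hπ, hfix, fun b hb => ?_, by exact_mod_cast diagXray_self_eq_zero π hfix⟩
    rw [← hdiffs, hcount b hb]
    exact ⟨by exact_mod_cast diagXray_sub_eq_add π hπ b, rfl⟩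
  · rintro ⟨hπ, hfix, hxray, -⟩
    refine ⟨hπ, hfix, Multiset.eq_of_card_eq_of_count_pos_eq ?_ fun b hb => ?_⟩
    · simp [card_pairDiffs hπ hfix]
    · rw [hcount b hb, (hxray b hb).2]

theorem stmt4 (n : ℕ) (hn : 0 < n) (a : Fin n → ℕ) (ha_pos : ∀ i, 0 < a i) :
    (∃ s t : Fin n → ℕ, IsPartitionOfIcc n s t ∧ (∀ i, s i < t i) ∧
        Multiset.map (fun i => t i - s i) (Finset.univ : Finset (Fin n)).val =
          Multiset.map a (Finset.univ : Finset (Fin n)).val) ↔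
      ∃ π : Equiv.Perm (Fin (2 * n)), (∀ i, π (π i) = i) ∧ (∀ i, π i ≠ i) ∧
        (∀ b : ℕ, 0 < b →
          diagXray (2 * n) π ((2 * n : ℤ) - b) =
              Multiset.count b (Multiset.map a (Finset.univ : Finset (Fin n)).val) ∧
            diagXray (2 * n) π ((2 * n : ℤ) + b) =
              Multiset.count b (Multiset.map a (Finset.univ : Finset (Fin n)).val)) ∧
        diagXray (2 * n) π (2 * n) = 0 :=
  stmt4_general n a
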